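/- arXiv:1611.00342 — 5 statements merged into one kernel-verified Lean document; each statement's English description precedes it below -/
import Mathlib

section
/- Let x, y, z be real numbers with x > 0, y > 0, z > 0 and x + y + z < 1, and let t > 0. Then ∫₀^∞ ∫₀^∞ ∫₀^∞ [ α^{−x} β^{−y} γ^{−z} / (αβ + βγ + γα) ] · exp( − αβγ t / (αβ + βγ + γα) ) dα dβ dγ = t^{x+y+z−1} · Γ(1−x−y−z) Γ(x) Γ(y) Γ(z) / Γ(x+y+z), where Γ denotes the real Gamma function. -/
open MeasureTheory Set Real
open scoped ENNReal

/-! Inverting the Schwinger parameters, `α ↦ α⁻¹` and likewise for `β, γ`, turns the integrand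
into `α^(x-1) β^(y-1) γ^(z-1) e^(-t/(α+β+γ)) / (α+β+γ)`: powers times a function of `α + β + γ`.
The Dirichlet-type identity `∫∫ β^(a-1) γ^(b-1) φ(β+γ) = Γ(a)Γ(b)/Γ(a+b) ∫ σ^(a+b-1) φ(σ)`
(substitute `γ = βu`, swap the integrals, rescale; the constant is read off from `φ(σ) = e^(-σ)`)
collapses the three integrals to one, and a last inversion `σ ↦ σ⁻¹` leaves a Gamma integral.
All of this is done with lower Lebesgue integrals, where Tonelli needs no integrability; finiteness
of the result then transfers the value to the Bochner integral. -/

section IteratedIntegral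

variable {X Y Z : Type*} [MeasurableSpace X] [MeasurableSpace Y] [MeasurableSpace Z]
  {μ : Measure X} {ν : Measure Y} {ρ : Measure Z}

theorem integral_eq_toReal_lintegral_of_ae_eq {f : X → ℝ} {F : X → ℝ≥0∞}
    (hF : AEMeasurable F μ) (hfin : ∫⁻ a, F a ∂μ ≠ ∞) (hf : ∀ᵐ a ∂μ, f a = (F a).toReal) :
    ∫ a, f a ∂μ = (∫⁻ a, F a ∂μ).toReal :=
  (integral_congr_ae hf).trans (integral_toReal hF (ae_lt_top' hF hfin))

theorem integral_integral_integral_eq_toReal_lintegral [SFinite ν] [SFinite ρ]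
    {f : X → Y → Z → ℝ} (hf : Measurable fun p : (X × Y) × Z => f p.1.1 p.1.2 p.2)
    (hnn : ∀ᵐ a ∂μ, ∀ᵐ b ∂ν, ∀ᵐ c ∂ρ, 0 ≤ f a b c)
    (hfin : ∫⁻ a, ∫⁻ b, ∫⁻ c, ENNReal.ofReal (f a b c) ∂ρ ∂ν ∂μ ≠ ∞) :
    ∫ a, ∫ b, ∫ c, f a b c ∂ρ ∂ν ∂μ
      = (∫⁻ a, ∫⁻ b, ∫⁻ c, ENNReal.ofReal (f a b c) ∂ρ ∂ν ∂μ).toReal := by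
  have hF₂ : Measurable fun q : X × Y => ∫⁻ c, ENNReal.ofReal (f q.1 q.2 c) ∂ρ :=
    hf.ennreal_ofReal.lintegral_prod_right'
  have hF₁ : Measurable fun a => ∫⁻ b, ∫⁻ c, ENNReal.ofReal (f a b c) ∂ρ ∂ν :=
    hF₂.lintegral_prod_right'
  refine integral_eq_toReal_lintegral_of_ae_eq hF₁.aemeasurable hfin ?_
  filter_upwards [hnn, ae_lt_top hF₁ hfin] with a hnn_a hfin_a
  refine integral_eq_toReal_lintegral_of_ae_eq (hF₂.comp measurable_prodMk_left).aemeasurable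
    hfin_a.ne ?_
  filter_upwards [hnn_a] with b hnn_ab
  exact integral_eq_lintegral_of_nonneg_ae hnn_ab
    (hf.comp (measurable_prodMk_left (x := (a, b)))).aestronglyMeasurable

end IteratedIntegral

theorem lintegral_Ioi_comp_inv (g : ℝ → ℝ≥0∞) :
    ∫⁻ x in Ioi 0, g x = ∫⁻ x in Ioi 0, ENNReal.ofReal (x ^ 2)⁻¹ * g x⁻¹ := by
  have himage : (·⁻¹) '' Ioi (0 : ℝ) = Ioi 0 := by
    ext x; simp [Set.image_inv_eq_inv]
  conv_lhs => rw [← himage]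
  rw [lintegral_image_eq_lintegral_abs_deriv_mul measurableSet_Ioi
    (fun x hx => (hasDerivAt_inv (ne_of_gt hx)).hasDerivWithinAt) inv_injective.injOn g]
  refine setLIntegral_congr_fun measurableSet_Ioi fun x (hx : 0 < x) => ?_
  rw [abs_neg, abs_of_pos (by positivity)]

theorem lintegral_Ioi_comp_mul_left {c : ℝ} (hc : 0 < c) (g : ℝ → ℝ≥0∞) :
    ∫⁻ x in Ioi 0, g x = ENNReal.ofReal c * ∫⁻ x in Ioi 0, g (c * x) := by
  conv_lhs => rw [← image_const_mul_Ioi_zero hc]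
  rw [lintegral_image_eq_lintegral_abs_deriv_mul measurableSet_Ioi
    (fun x _ => by simpa using ((hasDerivAt_id x).const_mul c).hasDerivWithinAt)
    (mul_right_injective₀ hc.ne').injOn g,
    abs_of_pos hc, lintegral_const_mul' _ _ ENNReal.ofReal_ne_top]

theorem lintegral_Ioi_rpow_mul_comp_mul_left {m : ℝ} (hm : 0 < m) (p : ℝ) (φ : ℝ → ℝ≥0∞) :
    ∫⁻ x in Ioi 0, ENNReal.ofReal (x ^ (p - 1)) * φ (m * x)
      = ENNReal.ofReal (m ^ (-p)) * ∫⁻ x in Ioi 0, ENNReal.ofReal (x ^ (p - 1)) * φ x := by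
  conv_rhs => rw [lintegral_Ioi_comp_mul_left hm]
  rw [← mul_assoc, ← ENNReal.ofReal_mul (by positivity),
    ← lintegral_const_mul' _ _ ENNReal.ofReal_ne_top]
  refine (setLIntegral_congr_fun measurableSet_Ioi fun x (hx : 0 < x) => ?_).symm
  have hcancel : m ^ (-p) * m * m ^ (p - 1) = 1 := by
    rw [← rpow_add_one hm.ne', ← rpow_add hm]
    norm_num
  rw [← mul_assoc, ← ENNReal.ofReal_mul (by positivity), mul_rpow hm.le hx.le, ← mul_assoc,
    hcancel, one_mul]

theorem lintegral_Ioi_rpow_mul_exp_neg {a : ℝ} (ha : 0 < a) :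
    ∫⁻ x in Ioi 0, ENNReal.ofReal (x ^ (a - 1)) * ENNReal.ofReal (rexp (-x))
      = ENNReal.ofReal (Gamma a) := by
  rw [Gamma_eq_integral ha, ofReal_integral_eq_lintegral_ofReal (GammaIntegral_convergent ha)]
  · refine setLIntegral_congr_fun measurableSet_Ioi fun x (hx : 0 < x) => ?_
    rw [← ENNReal.ofReal_mul (by positivity), mul_comm]
  · filter_upwards [ae_restrict_mem measurableSet_Ioi] with x (hx : 0 < x)
    positivity

theorem lintegral_Ioi_Ioi_rpow_mul_rpow_mul_comp_add (a b : ℝ) {φ : ℝ → ℝ≥0∞}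
    (hφ : Measurable φ) :
    ∫⁻ β in Ioi 0, ∫⁻ γ in Ioi 0,
        ENNReal.ofReal (β ^ (a - 1)) * ENNReal.ofReal (γ ^ (b - 1)) * φ (β + γ)
      = (∫⁻ u in Ioi 0, ENNReal.ofReal (u ^ (b - 1) * (1 + u) ^ (-(a + b)))) *
          ∫⁻ σ in Ioi 0, ENNReal.ofReal (σ ^ (a + b - 1)) * φ σ := by
  calc _ = ∫⁻ β in Ioi 0, ∫⁻ u in Ioi 0,
          ENNReal.ofReal (u ^ (b - 1)) * (ENNReal.ofReal (β ^ (a + b - 1)) * φ ((1 + u) * β)) := by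
        refine setLIntegral_congr_fun measurableSet_Ioi fun β (hβ : 0 < β) => ?_
        rw [lintegral_Ioi_comp_mul_left hβ, ← lintegral_const_mul' _ _ ENNReal.ofReal_ne_top]
        refine setLIntegral_congr_fun measurableSet_Ioi fun u (hu : 0 < u) => ?_
        have hpow : β * β ^ (a - 1) * (β * u) ^ (b - 1) = u ^ (b - 1) * β ^ (a + b - 1) := by
          rw [mul_rpow hβ.le hu.le, show a + b - 1 = 1 + (a - 1) + (b - 1) by ring,
            rpow_add hβ, rpow_add hβ, rpow_one]
          ring
        rw [show β + β * u = (1 + u) * β by ring, ← mul_assoc, ← mul_assoc,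
          ← ENNReal.ofReal_mul hβ.le, ← ENNReal.ofReal_mul (by positivity), hpow,
          ENNReal.ofReal_mul (by positivity), mul_assoc]
    _ = ∫⁻ u in Ioi 0, ∫⁻ β in Ioi 0,
          ENNReal.ofReal (u ^ (b - 1)) * (ENNReal.ofReal (β ^ (a + b - 1)) * φ ((1 + u) * β)) :=
        lintegral_lintegral_swap (by fun_prop)
    _ = ∫⁻ u in Ioi 0, ENNReal.ofReal (u ^ (b - 1)) * (ENNReal.ofReal ((1 + u) ^ (-(a + b))) *
          ∫⁻ σ in Ioi 0, ENNReal.ofReal (σ ^ (a + b - 1)) * φ σ) := by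
        refine setLIntegral_congr_fun measurableSet_Ioi fun u (hu : 0 < u) => ?_
        rw [lintegral_const_mul' _ _ ENNReal.ofReal_ne_top,
          lintegral_Ioi_rpow_mul_comp_mul_left (by positivity)]
    _ = _ := by
        rw [← lintegral_mul_const _ (by fun_prop)]
        refine setLIntegral_congr_fun measurableSet_Ioi fun u (hu : 0 < u) => ?_
        rw [ENNReal.ofReal_mul (by positivity), mul_assoc]

theorem lintegral_Ioi_rpow_mul_one_add_rpow {a b : ℝ} (ha : 0 < a) (hb : 0 < b) :
    ∫⁻ u in Ioi 0, ENNReal.ofReal (u ^ (b - 1) * (1 + u) ^ (-(a + b)))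
      = ENNReal.ofReal (Gamma a * Gamma b / Gamma (a + b)) := by
  have key := lintegral_Ioi_Ioi_rpow_mul_rpow_mul_comp_add a b
    (measurable_neg.exp.ennreal_ofReal : Measurable fun σ => ENNReal.ofReal (rexp (-σ)))
  have hsplit : ∀ β γ : ℝ, ENNReal.ofReal (β ^ (a - 1)) * ENNReal.ofReal (γ ^ (b - 1)) *
      ENNReal.ofReal (rexp (-(β + γ))) = ENNReal.ofReal (β ^ (a - 1)) * ENNReal.ofReal (rexp (-β)) *
        (ENNReal.ofReal (γ ^ (b - 1)) * ENNReal.ofReal (rexp (-γ))) := fun β γ => by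
    rw [neg_add, exp_add, ENNReal.ofReal_mul (exp_pos _).le]
    ring
  simp_rw [hsplit] at key
  rw [lintegral_lintegral_mul (by fun_prop) (by fun_prop), lintegral_Ioi_rpow_mul_exp_neg ha,
    lintegral_Ioi_rpow_mul_exp_neg hb, lintegral_Ioi_rpow_mul_exp_neg (add_pos ha hb)] at key
  have hΓ : 0 < Gamma (a + b) := Gamma_pos_of_pos (add_pos ha hb)
  rw [ENNReal.ofReal_div_of_pos hΓ, ENNReal.ofReal_mul (Gamma_pos_of_pos ha).le, key,
    ENNReal.mul_div_cancel_right (by simpa using hΓ) ENNReal.ofReal_ne_top]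

theorem lintegral_Ioi_Ioi_rpow_mul_rpow_mul_comp_add_eq_Gamma {a b : ℝ} (ha : 0 < a) (hb : 0 < b)
    {φ : ℝ → ℝ≥0∞} (hφ : Measurable φ) :
    ∫⁻ β in Ioi 0, ∫⁻ γ in Ioi 0,
        ENNReal.ofReal (β ^ (a - 1)) * ENNReal.ofReal (γ ^ (b - 1)) * φ (β + γ)
      = ENNReal.ofReal (Gamma a * Gamma b / Gamma (a + b)) *
          ∫⁻ σ in Ioi 0, ENNReal.ofReal (σ ^ (a + b - 1)) * φ σ := by
  rw [lintegral_Ioi_Ioi_rpow_mul_rpow_mul_comp_add a b hφ,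
    lintegral_Ioi_rpow_mul_one_add_rpow ha hb]

theorem lintegral_Ioi_Ioi_Ioi_comp_inv (G : ℝ → ℝ → ℝ → ℝ≥0∞) :
    ∫⁻ α in Ioi 0, ∫⁻ β in Ioi 0, ∫⁻ γ in Ioi 0, G α β γ
      = ∫⁻ α in Ioi 0, ∫⁻ β in Ioi 0, ∫⁻ γ in Ioi 0, ENNReal.ofReal (α ^ 2)⁻¹ *
          (ENNReal.ofReal (β ^ 2)⁻¹ * (ENNReal.ofReal (γ ^ 2)⁻¹ * G α⁻¹ β⁻¹ γ⁻¹)) := by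
  rw [lintegral_Ioi_comp_inv]
  congr 1 with α
  rw [lintegral_Ioi_comp_inv, ← lintegral_const_mul' _ _ ENNReal.ofReal_ne_top]
  congr 1 with β
  rw [lintegral_Ioi_comp_inv, ← lintegral_const_mul' _ _ ENNReal.ofReal_ne_top,
    ← lintegral_const_mul' _ _ ENNReal.ofReal_ne_top]

theorem lintegral_Ioi_rpow_mul_exp_neg_div {s t : ℝ} (hs : s < 1) (ht : 0 < t) :
    ∫⁻ σ in Ioi 0, ENNReal.ofReal (σ ^ (s - 1)) * ENNReal.ofReal (rexp (-(t / σ)) / σ)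
      = ENNReal.ofReal (t ^ (s - 1) * Gamma (1 - s)) := by
  rw [lintegral_Ioi_comp_inv]
  calc _ = ∫⁻ σ in Ioi 0, ENNReal.ofReal (σ ^ (1 - s - 1)) * ENNReal.ofReal (rexp (-(t * σ))) := by
        refine setLIntegral_congr_fun measurableSet_Ioi fun σ (hσ : 0 < σ) => ?_
        rw [← ENNReal.ofReal_mul (by positivity), ← ENNReal.ofReal_mul (by positivity),
          ← ENNReal.ofReal_mul (by positivity), inv_rpow hσ.le, ← rpow_neg hσ.le, div_inv_eq_mul,
          rpow_sub hσ, rpow_sub hσ, rpow_neg hσ.le, rpow_sub hσ, rpow_one]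
        congr 1
        field_simp
    _ = _ := by
        rw [lintegral_Ioi_rpow_mul_comp_mul_left ht _ (fun σ => ENNReal.ofReal (rexp (-σ))),
          lintegral_Ioi_rpow_mul_exp_neg (by linarith), ← ENNReal.ofReal_mul (by positivity),
          neg_sub]

noncomputable def sunsetIntegrand (x y z t α β γ : ℝ) : ℝ :=
  α ^ (-x) * β ^ (-y) * γ ^ (-z) / (α * β + β * γ + γ * α) *
    rexp (-(α * β * γ * t) / (α * β + β * γ + γ * α))

theorem sunsetIntegrand_nonneg (x y z t : ℝ) {α β γ : ℝ} (hα : 0 < α) (hβ : 0 < β) (hγ : 0 < γ) :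
    0 ≤ sunsetIntegrand x y z t α β γ := by
  unfold sunsetIntegrand; positivity

theorem sunsetIntegrand_inv (x y z t : ℝ) {α β γ : ℝ} (hα : 0 < α) (hβ : 0 < β) (hγ : 0 < γ) :
    (α ^ 2)⁻¹ * ((β ^ 2)⁻¹ * ((γ ^ 2)⁻¹ * sunsetIntegrand x y z t α⁻¹ β⁻¹ γ⁻¹))
      = α ^ (x - 1) * (β ^ (y - 1) * γ ^ (z - 1) *
          (rexp (-(t / (α + (β + γ)))) / (α + (β + γ)))) := by
  have hden : α⁻¹ * β⁻¹ + β⁻¹ * γ⁻¹ + γ⁻¹ * α⁻¹ = (α + (β + γ)) / (α * β * γ) := by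
    field_simp; ring
  have harg : -(α⁻¹ * β⁻¹ * γ⁻¹ * t) / ((α + (β + γ)) / (α * β * γ)) = -(t / (α + (β + γ))) := by
    field_simp
  rw [sunsetIntegrand, hden, harg, inv_rpow hα.le, inv_rpow hβ.le, inv_rpow hγ.le,
    ← rpow_neg hα.le, ← rpow_neg hβ.le, ← rpow_neg hγ.le, neg_neg, neg_neg, neg_neg,
    rpow_sub_one hα.ne', rpow_sub_one hβ.ne', rpow_sub_one hγ.ne']
  field_simp

theorem lintegral_sunsetIntegrand {x y z t : ℝ} (hx : 0 < x) (hy : 0 < y) (hz : 0 < z)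
    (hsum : x + y + z < 1) (ht : 0 < t) :
    ∫⁻ α in Ioi 0, ∫⁻ β in Ioi 0, ∫⁻ γ in Ioi 0, ENNReal.ofReal (sunsetIntegrand x y z t α β γ)
      = ENNReal.ofReal (t ^ (x + y + z - 1) *
          (Gamma (1 - x - y - z) * Gamma x * Gamma y * Gamma z / Gamma (x + y + z))) := by
  set ψ : ℝ → ℝ≥0∞ := fun σ => ENNReal.ofReal (rexp (-(t / σ)) / σ)
  have hψ : Measurable ψ := by fun_prop
  calc _ = ∫⁻ α in Ioi 0, ENNReal.ofReal (α ^ (x - 1)) * ∫⁻ β in Ioi 0, ∫⁻ γ in Ioi 0,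
          ENNReal.ofReal (β ^ (y - 1)) * ENNReal.ofReal (γ ^ (z - 1)) * ψ (α + (β + γ)) := by
        rw [lintegral_Ioi_Ioi_Ioi_comp_inv]
        refine setLIntegral_congr_fun measurableSet_Ioi fun α (hα : 0 < α) => ?_
        rw [← lintegral_const_mul' _ _ ENNReal.ofReal_ne_top]
        refine setLIntegral_congr_fun measurableSet_Ioi fun β (hβ : 0 < β) => ?_
        rw [← lintegral_const_mul' _ _ ENNReal.ofReal_ne_top]
        refine setLIntegral_congr_fun measurableSet_Ioi fun γ (hγ : 0 < γ) => ?_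
        simp only [ψ]
        rw [← ENNReal.ofReal_mul (by positivity), ← ENNReal.ofReal_mul (by positivity),
          ← ENNReal.ofReal_mul (by positivity), ← ENNReal.ofReal_mul (by positivity),
          ← ENNReal.ofReal_mul (by positivity), ← ENNReal.ofReal_mul (by positivity),
          sunsetIntegrand_inv x y z t hα hβ hγ]
    _ = ENNReal.ofReal (Gamma y * Gamma z / Gamma (y + z)) * ∫⁻ α in Ioi 0, ∫⁻ σ in Ioi 0,
          ENNReal.ofReal (α ^ (x - 1)) * ENNReal.ofReal (σ ^ (y + z - 1)) * ψ (α + σ) := by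
        rw [← lintegral_const_mul' _ _ ENNReal.ofReal_ne_top]
        refine setLIntegral_congr_fun measurableSet_Ioi fun α _ => ?_
        have hyz := lintegral_Ioi_Ioi_rpow_mul_rpow_mul_comp_add_eq_Gamma hy hz
          (φ := fun σ => ψ (α + σ)) (by fun_prop)
        rw [hyz, ← lintegral_const_mul' _ _ ENNReal.ofReal_ne_top,
          ← lintegral_const_mul' _ _ ENNReal.ofReal_ne_top,
          ← lintegral_const_mul' _ _ ENNReal.ofReal_ne_top]
        congr 1 with σ
        ring
    _ = ENNReal.ofReal (Gamma y * Gamma z / Gamma (y + z)) *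
          (ENNReal.ofReal (Gamma x * Gamma (y + z) / Gamma (x + (y + z))) *
            ENNReal.ofReal (t ^ (x + (y + z) - 1) * Gamma (1 - (x + (y + z))))) := by
        rw [lintegral_Ioi_Ioi_rpow_mul_rpow_mul_comp_add_eq_Gamma hx (by positivity) hψ,
          lintegral_Ioi_rpow_mul_exp_neg_div (by linarith) ht]
    _ = _ := by
        have hs : 0 < 1 - (x + (y + z)) := by linarith
        have hΓyz : Gamma (y + z) ≠ 0 := (Gamma_pos_of_pos (by positivity)).ne'
        rw [← ENNReal.ofReal_mul (by positivity), ← ENNReal.ofReal_mul (by positivity)]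
        congr 1
        rw [← add_assoc, show 1 - (x + y + z) = 1 - x - y - z by ring]
        field_simp

/-- The analytically regularized two-loop sunset integral in Schwinger parameters:
for regulators `x, y, z > 0` with `x + y + z < 1` and external invariant `t > 0`,
`∫₀^∞∫₀^∞∫₀^∞ α^{−x}β^{−y}γ^{−z}/(αβ+βγ+γα) · exp(−αβγ t/(αβ+βγ+γα)) dα dβ dγ
  = t^{x+y+z−1} Γ(1−x−y−z)Γ(x)Γ(y)Γ(z)/Γ(x+y+z)`. -/
theorem sunset_schwinger_integral
    (x y z t : ℝ) (hx : 0 < x) (hy : 0 < y) (hz : 0 < z)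
    (hsum : x + y + z < 1) (ht : 0 < t) :
    (∫ α in Ioi (0:ℝ), ∫ β in Ioi (0:ℝ), ∫ γ in Ioi (0:ℝ),
        (α ^ (-x) * β ^ (-y) * γ ^ (-z) / (α*β + β*γ + γ*α)) *
          Real.exp (-(α*β*γ*t) / (α*β + β*γ + γ*α)))
      = t ^ (x + y + z - 1) *
          (Real.Gamma (1 - x - y - z) * Real.Gamma x * Real.Gamma y * Real.Gamma z /
            Real.Gamma (x + y + z)) := by
  have hval := lintegral_sunsetIntegrand hx hy hz hsum ht
  have hnn : ∀ᵐ α ∂volume.restrict (Ioi 0), ∀ᵐ β ∂volume.restrict (Ioi 0),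
      ∀ᵐ γ ∂volume.restrict (Ioi 0), 0 ≤ sunsetIntegrand x y z t α β γ := by
    filter_upwards [ae_restrict_mem measurableSet_Ioi] with α hα
    filter_upwards [ae_restrict_mem measurableSet_Ioi] with β hβ
    filter_upwards [ae_restrict_mem measurableSet_Ioi] with γ hγ
    exact sunsetIntegrand_nonneg x y z t hα hβ hγ
  have hs : 0 < 1 - x - y - z := by linarith
  calc _ = (∫⁻ α in Ioi 0, ∫⁻ β in Ioi 0, ∫⁻ γ in Ioi 0,
          ENNReal.ofReal (sunsetIntegrand x y z t α β γ)).toReal :=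
        integral_integral_integral_eq_toReal_lintegral (by unfold sunsetIntegrand; fun_prop) hnn
          (hval ▸ ENNReal.ofReal_ne_top)
    _ = _ := by rw [hval, ENNReal.toReal_ofReal (by positivity)]
end

section
/- For all real x > 0, y > 0, z > 0, ∫₀^∞ ∫₀^1 [ α^{y+z−1} (1−α)^{x+z−1} γ^{x+y−1} / ( α(1−α) + γ )^{x+y+z} ] dα dγ = Γ(x) Γ(y) Γ(z) / Γ(x+y+z), where Γ denotes the real Gamma function. -/
/-!
For fixed `α ∈ (0, 1)` the `γ`-integral is a Beta integral in disguise: the substitution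
`γ = c w / (1 - w)` with `c = α (1 - α)` turns it into `c ^ (-z) B(x + y, z)`, and the factor
`c ^ (-z)` lowers the exponents of `α` and `1 - α` to `y - 1` and `x - 1`. The remaining
`α`-integral is `B(y, x)`, and `B(y, x) B(x + y, z) = Γ(x) Γ(y) Γ(z) / Γ(x + y + z)`. The kernel
is nonnegative, so Tonelli justifies integrating in the order `α`-outer, `γ`-inner.
-/

open MeasureTheory Set Real ProbabilityTheory
open scoped ENNReal

theorem integral_integral_eq_toReal_lintegral_lintegral_swap
    {X Y : Type*} [MeasurableSpace X] [MeasurableSpace Y] {μ : Measure X} {ν : Measure Y}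
    [SFinite μ] [SFinite ν] {f : X → Y → ℝ} (hf : Measurable (Function.uncurry f))
    (hf_nonneg : ∀ᵐ x ∂μ, ∀ᵐ y ∂ν, 0 ≤ f x y)
    (hf_fin : ∫⁻ y, ∫⁻ x, ENNReal.ofReal (f x y) ∂μ ∂ν ≠ ∞) :
    ∫ x, ∫ y, f x y ∂ν ∂μ = (∫⁻ y, ∫⁻ x, ENNReal.ofReal (f x y) ∂μ ∂ν).toReal := by
  have hF : Measurable (Function.uncurry fun x y => ENNReal.ofReal (f x y)) :=
    ENNReal.measurable_ofReal.comp hf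
  have hswap := lintegral_lintegral_swap (μ := μ) (ν := ν) hF.aemeasurable
  have hinner : Measurable fun x => ∫⁻ y, ENNReal.ofReal (f x y) ∂ν :=
    hF.lintegral_prod_right' (ν := ν)
  calc ∫ x, ∫ y, f x y ∂ν ∂μ = ∫ x, (∫⁻ y, ENNReal.ofReal (f x y) ∂ν).toReal ∂μ := by
        refine integral_congr_ae (hf_nonneg.mono fun x hx => ?_)
        exact integral_eq_lintegral_of_nonneg_ae hx
          (hf.comp measurable_prodMk_left).aestronglyMeasurable
    _ = _ := by
        rw [integral_toReal hinner.aemeasurable (ae_lt_top hinner (hswap ▸ hf_fin)), hswap]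

theorem lintegral_rpow_mul_one_sub_rpow {a b : ℝ} (ha : 0 < a) (hb : 0 < b) :
    ∫⁻ t in Ioo 0 1, ENNReal.ofReal (t ^ (a - 1) * (1 - t) ^ (b - 1)) =
      ENNReal.ofReal (beta a b) := by
  have h := lintegral_betaPDF_eq_one ha hb
  have hB := beta_pos ha hb
  simp_rw [lintegral_betaPDF, mul_assoc, ENNReal.ofReal_mul (one_div_pos.2 hB).le] at h
  rw [lintegral_const_mul' _ _ ENNReal.ofReal_ne_top, mul_comm] at h
  rw [ENNReal.eq_inv_of_mul_eq_one_left h, ← ENNReal.ofReal_inv_of_pos (one_div_pos.2 hB),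
    one_div, inv_inv]

theorem hasDerivAt_mul_div_one_sub (c : ℝ) {w : ℝ} (hw : w ≠ 1) :
    HasDerivAt (fun w => c * w / (1 - w)) (c / (1 - w) ^ 2) w := by
  have h1 : 1 - w ≠ 0 := sub_ne_zero.2 hw.symm
  refine (((hasDerivAt_id w).const_mul c).div ((hasDerivAt_id w).const_sub 1) h1).congr_deriv ?_
  simp only [id]
  ring

theorem image_mul_div_one_sub_Ioo {c : ℝ} (hc : 0 < c) :
    (fun w => c * w / (1 - w)) '' Ioo 0 1 = Ioi 0 := by
  ext γ
  constructor
  · rintro ⟨w, ⟨hw0, hw1⟩, rfl⟩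
    exact div_pos (mul_pos hc hw0) (sub_pos.2 hw1)
  · intro (hγ : 0 < γ)
    refine ⟨γ / (c + γ), ⟨by positivity, (div_lt_one (by positivity)).2 (by linarith)⟩, ?_⟩
    field_simp [hc.ne']
    ring

theorem injOn_mul_div_one_sub {c : ℝ} (hc : 0 < c) :
    InjOn (fun w => c * w / (1 - w)) (Ioo 0 1) := by
  rintro v ⟨-, hv⟩ w ⟨-, hw⟩ h
  have : 1 - v ≠ 0 := by linarith
  have : 1 - w ≠ 0 := by linarith
  field_simp at h
  nlinarith

theorem lintegral_Ioi_rpow_div_add_rpow (s t : ℝ) {c : ℝ} (hc : 0 < c) :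
    ∫⁻ γ in Ioi 0, ENNReal.ofReal (γ ^ (s - 1) / (c + γ) ^ (s + t)) =
      ENNReal.ofReal (c ^ (-t)) *
        ∫⁻ w in Ioo 0 1, ENNReal.ofReal (w ^ (s - 1) * (1 - w) ^ (t - 1)) := by
  rw [← image_mul_div_one_sub_Ioo hc, lintegral_image_eq_lintegral_abs_deriv_mul measurableSet_Ioo
    (fun w hw => (hasDerivAt_mul_div_one_sub c hw.2.ne).hasDerivWithinAt)
    (injOn_mul_div_one_sub hc), ← lintegral_const_mul' _ _ ENNReal.ofReal_ne_top]
  refine setLIntegral_congr_fun measurableSet_Ioo fun w ⟨hw0, hw1⟩ => ?_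
  have hu : 0 < 1 - w := sub_pos.2 hw1
  rw [← ENNReal.ofReal_mul (by positivity), ← ENNReal.ofReal_mul (by positivity)]
  congr 1
  set u := 1 - w
  have hcu : c + c * w / u = c / u := by field_simp; ring
  have hc_pow : c ^ (s + t) = c ^ (s - 1) * c ^ t * c := by
    rw [show s + t = s - 1 + t + 1 by ring, rpow_add_one hc.ne', rpow_add hc]
  have hu_pow : u ^ (s + t) = u ^ (s - 1) * u ^ (t - 1) * u ^ 2 := by
    rw [show s + t = s - 1 + (t - 1) + 2 by ring, rpow_add hu, rpow_add hu, Real.rpow_two]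
  have : 0 < c ^ (s - 1) := by positivity
  have : 0 < c ^ t := by positivity
  have : 0 < u ^ (s - 1) := by positivity
  have : 0 < u ^ (t - 1) := by positivity
  rw [hcu, abs_of_pos (by positivity), div_rpow (by positivity) hu.le, mul_rpow hc.le hw0.le,
    div_rpow hc.le hu.le, hc_pow, hu_pow, rpow_neg hc.le]
  field_simp

theorem beta_mul_beta_add {x y z : ℝ} (hx : 0 < x) (hy : 0 < y) (hz : 0 < z) :
    beta y x * beta (x + y) z = Gamma x * Gamma y * Gamma z / Gamma (x + y + z) := by
  have : Gamma (x + y) ≠ 0 := by positivity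
  have : Gamma (x + y + z) ≠ 0 := by positivity
  rw [beta, beta, add_comm y x]
  field_simp

noncomputable def chengWuKernel (x y z α γ : ℝ) : ℝ :=
  α ^ (y + z - 1) * (1 - α) ^ (x + z - 1) * γ ^ (x + y - 1) / (α * (1 - α) + γ) ^ (x + y + z)

theorem chengWuKernel_nonneg (x y z : ℝ) {α γ : ℝ} (hα : α ∈ Icc 0 1) (hγ : 0 ≤ γ) :
    0 ≤ chengWuKernel x y z α γ := by
  have := hα.1
  have : 0 ≤ 1 - α := sub_nonneg.2 hα.2
  unfold chengWuKernel
  positivity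

theorem lintegral_Ioi_chengWuKernel {x y z α : ℝ} (hxy : 0 < x + y) (hz : 0 < z)
    (hα : α ∈ Ioo 0 1) :
    ∫⁻ γ in Ioi 0, ENNReal.ofReal (chengWuKernel x y z α γ) =
      ENNReal.ofReal (α ^ (y - 1) * (1 - α) ^ (x - 1) * beta (x + y) z) := by
  obtain ⟨hα0, hα1⟩ := hα
  have h1α : 0 < 1 - α := sub_pos.2 hα1
  have hα_pow : α ^ (y + z - 1) * (1 - α) ^ (x + z - 1) * (α * (1 - α)) ^ (-z) =
      α ^ (y - 1) * (1 - α) ^ (x - 1) := by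
    rw [mul_rpow hα0.le h1α.le, mul_mul_mul_comm, ← rpow_add hα0, ← rpow_add h1α]
    ring_nf
  simp_rw [chengWuKernel, mul_div_assoc,
    ENNReal.ofReal_mul (by positivity : 0 ≤ α ^ (y + z - 1) * (1 - α) ^ (x + z - 1))]
  rw [lintegral_const_mul' _ _ ENNReal.ofReal_ne_top,
    lintegral_Ioi_rpow_div_add_rpow _ _ (by positivity), lintegral_rpow_mul_one_sub_rpow hxy hz,
    ← ENNReal.ofReal_mul (by positivity), ← ENNReal.ofReal_mul (by positivity), ← mul_assoc,
    hα_pow]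

theorem lintegral_lintegral_chengWuKernel {x y z : ℝ} (hx : 0 < x) (hy : 0 < y) (hz : 0 < z) :
    ∫⁻ α in Ioc 0 1, ∫⁻ γ in Ioi 0, ENNReal.ofReal (chengWuKernel x y z α γ) =
      ENNReal.ofReal (Gamma x * Gamma y * Gamma z / Gamma (x + y + z)) := by
  rw [← Measure.restrict_congr_set Ioo_ae_eq_Ioc, setLIntegral_congr_fun measurableSet_Ioo
    fun α hα => lintegral_Ioi_chengWuKernel (by positivity) hz hα]
  simp_rw [ENNReal.ofReal_mul' (beta_pos (add_pos hx hy) hz).le]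
  rw [lintegral_mul_const' _ _ ENNReal.ofReal_ne_top, lintegral_rpow_mul_one_sub_rpow hy hx,
    ← ENNReal.ofReal_mul (beta_pos hy hx).le, beta_mul_beta_add hx hy hz]

/-- The Cheng–Wu / Feynman-parameter Gamma identity for the sunset diagram:
for `x, y, z > 0`,
`∫₀^∞∫₀^1 α^{y+z−1}(1−α)^{x+z−1}γ^{x+y−1}/(α(1−α)+γ)^{x+y+z} dα dγ
  = Γ(x)Γ(y)Γ(z)/Γ(x+y+z)`. -/
theorem cheng_wu_gamma_identity
    (x y z : ℝ) (hx : 0 < x) (hy : 0 < y) (hz : 0 < z) :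
    (∫ γ in Ioi (0:ℝ), ∫ α in (0:ℝ)..1,
        α ^ (y + z - 1) * (1 - α) ^ (x + z - 1) * γ ^ (x + y - 1) /
          (α * (1 - α) + γ) ^ (x + y + z))
      = Real.Gamma x * Real.Gamma y * Real.Gamma z / Real.Gamma (x + y + z) := by
  change ∫ γ in Ioi 0, ∫ α in 0..1, chengWuKernel x y z α γ = _
  have hI := lintegral_lintegral_chengWuKernel hx hy hz
  simp_rw [intervalIntegral.integral_of_le zero_le_one]
  rw [integral_integral_eq_toReal_lintegral_lintegral_swap (by unfold chengWuKernel; fun_prop) ?_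
    (hI ▸ ENNReal.ofReal_ne_top), hI, ENNReal.toReal_ofReal (by positivity)]
  filter_upwards [ae_restrict_mem measurableSet_Ioi] with γ hγ
  filter_upwards [ae_restrict_mem measurableSet_Ioc] with α hα
  exact chengWuKernel_nonneg x y z (Ioc_subset_Icc_self hα) hγ.le
end

section
/- Let a > 0 and define H : ℝ³ → ℝ in a neighborhood of the origin by H(x,y,z) = [ Γ(1+x) Γ(1+y) Γ(1+z) / ( Γ(1−x) Γ(1−y) Γ(1−z) ) ] · a^{x+y+z}. Then the mixed third partial derivative ∂³H/∂x∂y∂z evaluated at (x,y,z) = (0,0,0) equals ( log a − 2γ_E )³, where γ_E is the Euler–Mascheroni constant. -/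
open Real

/-! The function `H` factors as `f x * f y * f z` with `f t = Γ(1+t)/Γ(1-t) · a^t`, so its mixed
third derivative at the origin is `f'(0)³`. Since `Γ'(1) = -γ_E` and `Γ(1) = 1`, the ratio
`Γ(1+t)/Γ(1-t)` has derivative `-2γ_E` at `0`, and `a^t` contributes `log a`. -/

-- No differentiability is needed: `deriv (c * g) = c * deriv g` holds for every `g` over a field.
theorem deriv_deriv_deriv_mul_mul {𝕜 : Type*} [NontriviallyNormedField 𝕜] (g : 𝕜 → 𝕜)
    (x₀ y₀ z₀ : 𝕜) :
    deriv (fun x => deriv (fun y => deriv (fun z => g x * g y * g z) z₀) y₀) x₀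
      = deriv g x₀ * deriv g y₀ * deriv g z₀ := by
  simp only [deriv_const_mul_field', deriv_mul_const_field']

theorem hasDerivAt_Gamma_one_add_div_Gamma_one_sub :
    HasDerivAt (fun t : ℝ => Gamma (1 + t) / Gamma (1 - t)) (-2 * eulerMascheroniConstant) 0 := by
  have hΓ : HasDerivAt Gamma (-eulerMascheroniConstant) (1 + 0) := by
    simpa using hasDerivAt_Gamma_one
  have hΓ' : HasDerivAt Gamma (-eulerMascheroniConstant) (1 - 0) := by
    simpa using hasDerivAt_Gamma_one
  have hplus := hΓ.comp_const_add 1 0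
  have hminus := hΓ'.comp_const_sub 1 0
  refine (hplus.fun_div hminus (by simp)).congr_deriv ?_
  simp only [add_zero, sub_zero, Gamma_one]
  ring

theorem deriv_Gamma_ratio_mul_rpow {a : ℝ} (ha : 0 < a) :
    deriv (fun t : ℝ => Gamma (1 + t) / Gamma (1 - t) * a ^ t) 0
      = log a - 2 * eulerMascheroniConstant := by
  have hpow : HasDerivAt (fun t : ℝ => a ^ t) (log a) 0 := by
    simpa using (hasStrictDerivAt_const_rpow ha 0).hasDerivAt
  rw [(hasDerivAt_Gamma_one_add_div_Gamma_one_sub.fun_mul hpow).deriv]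
  simp only [add_zero, sub_zero, Gamma_one, rpow_zero]
  ring

/-- The analytically regularized value of the sunset worldsheet diagram: for `a > 0`,
the mixed third partial derivative at the origin of
`H(x,y,z) = Γ(1+x)Γ(1+y)Γ(1+z)/(Γ(1−x)Γ(1−y)Γ(1−z)) · a^{x+y+z}`
equals `(log a − 2γ_E)³`. -/
theorem sunset_mixed_third_derivative (a : ℝ) (ha : 0 < a) :
    deriv (fun x : ℝ => deriv (fun y : ℝ => deriv (fun z : ℝ =>
        (Real.Gamma (1 + x) * Real.Gamma (1 + y) * Real.Gamma (1 + z) /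
          (Real.Gamma (1 - x) * Real.Gamma (1 - y) * Real.Gamma (1 - z))) *
          a ^ (x + y + z)) 0) 0) 0
      = (Real.log a - 2 * Real.eulerMascheroniConstant) ^ 3 := by
  set f : ℝ → ℝ := fun t => Gamma (1 + t) / Gamma (1 - t) * a ^ t
  have hsplit : ∀ x y z : ℝ,
      Gamma (1 + x) * Gamma (1 + y) * Gamma (1 + z) /
          (Gamma (1 - x) * Gamma (1 - y) * Gamma (1 - z)) * a ^ (x + y + z)
        = f x * f y * f z := by
    intro x y z
    simp only [f, rpow_add ha, mul_div_mul_comm]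
    ring
  simp only [hsplit, deriv_deriv_deriv_mul_mul, f, deriv_Gamma_ratio_mul_rpow ha]
  ring
end

section
/- Let ω > 0, let G : (0,∞) → ℝ be continuous, and let F : (0,∞) → ℝ be differentiable with u · F'(u) = G(u) − 1 for all u > 0. Define Φ : (0,∞) × ℝ → ℝ² by Φ(u,τ) = ( u e^{F(u)} cos(ωτ), u e^{F(u)} sin(ωτ) ). Then for all (u,τ): (i) ‖∂Φ/∂u‖² = e^{2F(u)} G(u)²; (ii) ‖∂Φ/∂τ‖² = ω² u² e^{2F(u)}; (iii) the vectors ∂Φ/∂u and ∂Φ/∂τ are orthogonal; and (iv) ‖Φ(u,τ)‖² = u² e^{2F(u)}. -/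
/-!
Write `Φ(u, τ) = r(u) • e(ωτ)` with `r(u) = u e^{F(u)}` and `e(θ) = (cos θ, sin θ)`.
The Tortoise equation `u F' = G - 1` is exactly what makes `r' = e^F G`, while `e` is a unit
vector whose derivative `e(θ + π/2)` is again a unit vector, orthogonal to `e(θ)`. Hence
`∂Φ/∂u = e^F G • e(ωτ)` and `∂Φ/∂τ = ω r • e(ωτ + π/2)` are orthogonal, with the stated norms.
-/

open Real Set

/-- The two-dimensional Kruskal-type "unwrapping" map
`(u, τ) ↦ u e^{F(u)} (cos ωτ, sin ωτ)`. -/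
noncomputable def kruskalMap (ω : ℝ) (F : ℝ → ℝ) (u τ : ℝ) : EuclideanSpace ℝ (Fin 2) :=
  (WithLp.equiv 2 (Fin 2 → ℝ)).symm
    ![u * Real.exp (F u) * Real.cos (ω * τ), u * Real.exp (F u) * Real.sin (ω * τ)]

noncomputable def polarUnit (θ : ℝ) : EuclideanSpace ℝ (Fin 2) := !₂[cos θ, sin θ]

theorem inner_polarUnit (a b : ℝ) : inner ℝ (polarUnit a) (polarUnit b) = cos (a - b) := by
  rw [cos_sub]
  simp [polarUnit, EuclideanSpace.inner_toLp_toLp, dotProduct, Fin.sum_univ_two]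
  ring

theorem norm_polarUnit (θ : ℝ) : ‖polarUnit θ‖ = 1 := by
  rw [norm_eq_sqrt_real_inner, inner_polarUnit, sub_self, cos_zero, sqrt_one]

theorem inner_polarUnit_add_pi_div_two (θ : ℝ) :
    inner ℝ (polarUnit θ) (polarUnit (θ + π / 2)) = 0 := by
  rw [inner_polarUnit, sub_add_cancel_left, cos_neg, cos_pi_div_two]

theorem hasDerivAt_polarUnit (θ : ℝ) : HasDerivAt polarUnit (polarUnit (θ + π / 2)) θ := by
  have h : HasDerivAt (fun t => ![cos t, sin t]) ![-sin θ, cos θ] θ := by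
    rw [hasDerivAt_pi]
    intro i
    fin_cases i
    · simpa using hasDerivAt_cos θ
    · simpa using hasDerivAt_sin θ
  refine ((EuclideanSpace.equiv (Fin 2) ℝ).symm.toContinuousLinearMap.hasFDerivAt.comp_hasDerivAt
    θ h).congr_deriv ?_
  simp [polarUnit, cos_add_pi_div_two, sin_add_pi_div_two]

theorem kruskalMap_eq_smul_polarUnit (ω : ℝ) (F : ℝ → ℝ) (u τ : ℝ) :
    kruskalMap ω F u τ = (u * exp (F u)) • polarUnit (ω * τ) := by
  ext i
  fin_cases i <;> simp [kruskalMap, polarUnit]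

theorem hasDerivAt_mul_exp_of_tortoise {F G : ℝ → ℝ} {u : ℝ} (hu : u ≠ 0)
    (hF : HasDerivAt F ((G u - 1) / u) u) :
    HasDerivAt (fun u => u * exp (F u)) (exp (F u) * G u) u := by
  refine ((hasDerivAt_id' u).mul hF.exp).congr_deriv ?_
  field_simp
  ring

theorem hasDerivAt_kruskalMap_radial {ω : ℝ} {F G : ℝ → ℝ} {u : ℝ} (τ : ℝ) (hu : u ≠ 0)
    (hF : HasDerivAt F ((G u - 1) / u) u) :
    HasDerivAt (fun u' => kruskalMap ω F u' τ) ((exp (F u) * G u) • polarUnit (ω * τ)) u := by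
  simp only [kruskalMap_eq_smul_polarUnit]
  exact (hasDerivAt_mul_exp_of_tortoise hu hF).smul_const _

theorem hasDerivAt_kruskalMap_angular (ω : ℝ) (F : ℝ → ℝ) (u τ : ℝ) :
    HasDerivAt (fun τ' => kruskalMap ω F u τ')
      ((ω * (u * exp (F u))) • polarUnit (ω * τ + π / 2)) τ := by
  simp only [kruskalMap_eq_smul_polarUnit]
  refine (((hasDerivAt_polarUnit (ω * τ)).scomp τ ((hasDerivAt_id τ).const_mul ω)).const_smul
    (u * exp (F u))).congr_deriv ?_
  rw [smul_smul]
  congr 1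
  ring

theorem kruskal_unwrapping_two_dim_general
    (ω : ℝ) (G : ℝ → ℝ)
    (F : ℝ → ℝ) (hF : ∀ u ∈ Ioi (0:ℝ), HasDerivAt F ((G u - 1) / u) u) :
    ∀ u ∈ Ioi (0:ℝ), ∀ τ : ℝ,
      ‖deriv (fun u' => kruskalMap ω F u' τ) u‖^2
          = Real.exp (2 * F u) * (G u)^2 ∧
      ‖deriv (fun τ' => kruskalMap ω F u τ') τ‖^2
          = ω^2 * u^2 * Real.exp (2 * F u) ∧
      (inner ℝ (deriv (fun u' => kruskalMap ω F u' τ) u)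
             (deriv (fun τ' => kruskalMap ω F u τ') τ) : ℝ) = 0 ∧
      ‖kruskalMap ω F u τ‖^2 = u^2 * Real.exp (2 * F u) := by
  intro u hu τ
  have hexp : exp (2 * F u) = exp (F u) ^ 2 := by rw [two_mul, exp_add, sq]
  rw [(hasDerivAt_kruskalMap_radial τ hu.ne' (hF u hu)).deriv,
    (hasDerivAt_kruskalMap_angular ω F u τ).deriv, kruskalMap_eq_smul_polarUnit, hexp]
  refine ⟨?_, ?_, ?_, ?_⟩ <;>
    simp only [norm_smul, norm_polarUnit, inner_smul_left, inner_smul_right,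
      inner_polarUnit_add_pi_div_two, norm_mul, norm_eq_abs, sq_abs, mul_pow, mul_zero, mul_one,
      mul_assoc]

/-- The two-dimensional Kruskal-type unwrapping of the cigar: if `G` is continuous on
`(0,∞)` and `F` satisfies the Tortoise equation `u F'(u) = G(u) − 1`, then the map
`Φ(u,τ) = u e^{F(u)}(cos ωτ, sin ωτ)` satisfies `‖∂Φ/∂u‖² = e^{2F} G²`,
`‖∂Φ/∂τ‖² = ω² u² e^{2F}`, `∂Φ/∂u ⟂ ∂Φ/∂τ`, and `‖Φ‖² = u² e^{2F}`. -/
theorem kruskal_unwrapping_two_dim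
    (ω : ℝ) (hω : 0 < ω) (G : ℝ → ℝ) (hG : ContinuousOn G (Ioi 0))
    (F : ℝ → ℝ) (hF : ∀ u ∈ Ioi (0:ℝ), HasDerivAt F ((G u - 1) / u) u) :
    ∀ u ∈ Ioi (0:ℝ), ∀ τ : ℝ,
      ‖deriv (fun u' => kruskalMap ω F u' τ) u‖^2
          = Real.exp (2 * F u) * (G u)^2 ∧
      ‖deriv (fun τ' => kruskalMap ω F u τ') τ‖^2
          = ω^2 * u^2 * Real.exp (2 * F u) ∧
      (inner ℝ (deriv (fun u' => kruskalMap ω F u' τ) u)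
             (deriv (fun τ' => kruskalMap ω F u τ') τ) : ℝ) = 0 ∧
      ‖kruskalMap ω F u τ‖^2 = u^2 * Real.exp (2 * F u) :=
  kruskal_unwrapping_two_dim_general ω G F hF
end

section
/- Let n ∈ ℕ, fix an index μ ∈ Fin n, and let G : ℝⁿ → Matrix (Fin n) (Fin n) ℝ be differentiable such that (i) G(p) is a diagonal matrix for every p, and (ii) the partial derivative of G in the μ-th coordinate direction vanishes identically. Define the lowered Christoffel-type array Γ_{A C B}(p) = ∂_B G_{A C}(p) + ∂_C G_{A B}(p) − ∂_A G_{C B}(p), where ∂_I denotes the partial derivative in the I-th coordinate direction. Then for all indices A, B and all p, Γ_{A μ B}(p) = − Γ_{B μ A}(p); consequently, for every symmetric matrix S ∈ Matrix (Fin n) (Fin n) ℝ, the contraction Σ_{A,B} Γ_{A μ B}(p) · S_{A B} = 0. -/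
open Real

/-- The partial derivative of `h : ℝⁿ → ℝ` at `p` in the `I`-th coordinate
direction. -/
noncomputable def partialDeriv {n : ℕ} (I : Fin n) (h : (Fin n → ℝ) → ℝ)
    (p : Fin n → ℝ) : ℝ :=
  fderiv ℝ h p (Pi.single I 1)

/-- The lowered Christoffel-type array
`Γ_{A C B}(p) = ∂_B G_{A C}(p) + ∂_C G_{A B}(p) − ∂_A G_{C B}(p)`. -/
noncomputable def lowerChristoffel {n : ℕ} (G : (Fin n → ℝ) → Matrix (Fin n) (Fin n) ℝ)
    (A C B : Fin n) (p : Fin n → ℝ) : ℝ :=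
  partialDeriv B (fun q => G q A C) p + partialDeriv C (fun q => G q A B) p -
    partialDeriv A (fun q => G q C B) p

/-! In `Γ_{AμB} + Γ_{BμA}` the `∂_μ` terms vanish and, since a diagonal `G` is symmetric, the
remaining terms cancel in pairs: `∂_B G_{Aμ} = ∂_B G_{μA}` and `∂_A G_{Bμ} = ∂_A G_{μB}`.
An antisymmetric array contracts to zero against a symmetric matrix. -/

theorem sum_sum_mul_eq_zero_of_antisymm_of_isSymm {ι R : Type*} [Fintype ι] [CommRing R]
    [NoZeroDivisors R] [CharZero R] {T : ι → ι → R} (hT : ∀ i j, T i j = -T j i)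
    {S : Matrix ι ι R} (hS : S.IsSymm) :
    ∑ i, ∑ j, T i j * S i j = 0 := by
  rw [← CharZero.eq_neg_self_iff]
  calc ∑ i, ∑ j, T i j * S i j = ∑ i, ∑ j, T j i * S j i := Finset.sum_comm
    _ = ∑ i, ∑ j, -(T i j * S i j) :=
      Finset.sum_congr rfl fun i _ => Finset.sum_congr rfl fun j _ => by
        rw [hT j i, hS.apply]; ring
    _ = -∑ i, ∑ j, T i j * S i j := by simp only [Finset.sum_neg_distrib]

theorem lowerChristoffel_antisymm_of_isSymm {n : ℕ} {μ : Fin n}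
    {G : (Fin n → ℝ) → Matrix (Fin n) (Fin n) ℝ} (hsymm : ∀ p, (G p).IsSymm)
    (hμ : ∀ (A B : Fin n) (p : Fin n → ℝ), partialDeriv μ (fun q => G q A B) p = 0)
    (A B : Fin n) (p : Fin n → ℝ) :
    lowerChristoffel G A μ B p = -lowerChristoffel G B μ A p := by
  have hswap : ∀ C, (fun q => G q C μ) = fun q => G q μ C :=
    fun C => funext fun q => (hsymm q).apply μ C
  simp only [lowerChristoffel, hμ, hswap]
  ring

theorem christoffel_middle_flat_antisymm_general
    (n : ℕ) (μ : Fin n) (G : (Fin n → ℝ) → Matrix (Fin n) (Fin n) ℝ)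
    (hdiag : ∀ (p : Fin n → ℝ), (G p).IsDiag)
    (hμ : ∀ (A B : Fin n) (p : Fin n → ℝ), partialDeriv μ (fun q => G q A B) p = 0) :
    (∀ (A B : Fin n) (p : Fin n → ℝ),
        lowerChristoffel G A μ B p = - lowerChristoffel G B μ A p) ∧
    (∀ (S : Matrix (Fin n) (Fin n) ℝ), S.IsSymm → ∀ p : Fin n → ℝ,
        (∑ A : Fin n, ∑ B : Fin n, lowerChristoffel G A μ B p * S A B) = 0) := by
  have hanti := lowerChristoffel_antisymm_of_isSymm (fun p => (hdiag p).isSymm) hμ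
  exact ⟨hanti, fun S hS p => sum_sum_mul_eq_zero_of_antisymm_of_isSymm (hanti · · p) hS⟩

/-- The supersymmetry argument: for a diagonal metric `G` whose partial derivative in
the `μ`-th coordinate direction vanishes identically, the lowered Christoffel array
with middle index `μ` is antisymmetric in its outer indices; consequently its
contraction with any symmetric matrix vanishes. -/
theorem christoffel_middle_flat_antisymm
    (n : ℕ) (μ : Fin n) (G : (Fin n → ℝ) → Matrix (Fin n) (Fin n) ℝ)
    (hdiff : ∀ A B : Fin n, Differentiable ℝ (fun p => G p A B))
    (hdiag : ∀ (p : Fin n → ℝ), (G p).IsDiag)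
    (hμ : ∀ (A B : Fin n) (p : Fin n → ℝ), partialDeriv μ (fun q => G q A B) p = 0) :
    (∀ (A B : Fin n) (p : Fin n → ℝ),
        lowerChristoffel G A μ B p = - lowerChristoffel G B μ A p) ∧
    (∀ (S : Matrix (Fin n) (Fin n) ℝ), S.IsSymm → ∀ p : Fin n → ℝ,
        (∑ A : Fin n, ∑ B : Fin n, lowerChristoffel G A μ B p * S A B) = 0) :=
  christoffel_middle_flat_antisymm_general n μ G hdiag hμ
end
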